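/- The degree-6 weighted theta coefficients of the D₄ lattice form a rank-one family: for all harmonic polynomials P and Q of degree 6 in 4 variables and all positive integers m and n, (∑_{x∈(D₄)_{2m}} P(x))·(∑_{x∈(D₄)_{2n}} Q(x)) = (∑_{x∈(D₄)_{2n}} P(x))·(∑_{x∈(D₄)_{2m}} Q(x)). (This expresses that the image of the degree-6 theta map of D₄ is the one-dimensional space of newforms of weight 8 and level 2, spanned by η(z)⁸η(2z)⁸.) -/

import Mathlib

open MvPolynomial

/-- A polynomial `P ∈ ℝ[x₁,…,x_d]` is *harmonic of degree `ℓ`* if it is homogeneous of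
degree `ℓ` and is annihilated by the Laplacian `∑ⱼ ∂²/∂xⱼ²`. -/
def IsHarmonic {d : ℕ} (ℓ : ℕ) (P : MvPolynomial (Fin d) ℝ) : Prop :=
  P.IsHomogeneous ℓ ∧ ∑ j : Fin d, pderiv j (pderiv j P) = 0

/-- The shell `{x ∈ ℤ^d : x₁² + ⋯ + x_d² = n}` as a `Finset`.  (The bounding box
`Finset.Icc` is harmless: any integer solution satisfies `|x i| ≤ x i ^ 2 ≤ n`.) -/
noncomputable def intShell (d n : ℕ) : Finset (Fin d → ℤ) :=
  (Finset.Icc (fun _ => -(n : ℤ)) (fun _ => (n : ℤ))).filter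
    (fun x => ∑ i, x i ^ 2 = (n : ℤ))

/-!
If a finite set `S ⊂ ℤ⁴` is stable under sign changes and permutations of the coordinates, as
a shell is, then `∑_{x ∈ S} x^α` vanishes unless every exponent is even, and is unchanged by
permuting `α`. The even exponent vectors of degree 6 in four variables are the permutations
of `(6,0,0,0)`, `(4,2,0,0)` and `(2,2,2,0)`, so `∑_{x ∈ S} P(x) = A M₆ + B M₄₂ + C M₂₂₂`,
where `M₆, M₄₂, M₂₂₂` are the moments of `S` at these three vectors and `A, B, C` are the
sums of the coefficients of `P` over their orbits. For harmonic `P`, the vanishing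
coefficients of `ΔP` at the monomials of types `(4,0,0,0)` and `(2,2,0,0)` give
`30 A + 2 B = 0` and `12 B + 6 C = 0`. Hence the sum is `A (M₆ - 15 M₄₂ + 30 M₂₂₂)`: one
linear functional of `P` times one sequence indexed by the shell.
-/

open Finset

section Shell

variable {d : ℕ}

theorem mem_intShell {n : ℕ} {x : Fin d → ℤ} : x ∈ intShell d n ↔ ∑ i, x i ^ 2 = n := by
  refine ⟨fun h => (mem_filter.1 h).2, fun h => mem_filter.2 ⟨mem_Icc.2 ⟨?_, ?_⟩, h⟩⟩ <;>
  · intro i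
    have hi : x i ^ 2 ≤ n := h ▸ single_le_sum (fun j _ => sq_nonneg (x j)) (mem_univ i)
    dsimp only
    nlinarith [sq_nonneg (x i + 1), sq_nonneg (x i - 1)]

theorem update_neg_mem_intShell {n : ℕ} {x : Fin d → ℤ} (hx : x ∈ intShell d n) (i : Fin d) :
    Function.update x i (-x i) ∈ intShell d n := by
  rw [mem_intShell] at hx ⊢
  rw [← hx]
  refine sum_congr rfl fun j _ => ?_
  rcases eq_or_ne j i with rfl | hj
  · simp
  · rw [Function.update_of_ne hj]

theorem comp_perm_mem_intShell {n : ℕ} {x : Fin d → ℤ} (hx : x ∈ intShell d n)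
    (σ : Equiv.Perm (Fin d)) : x ∘ σ ∈ intShell d n := by
  rw [mem_intShell] at hx ⊢
  rw [← hx]
  exact Equiv.sum_comp σ (fun i => x i ^ 2)

noncomputable def shellMoment (d n : ℕ) (α : Fin d → ℕ) : ℝ :=
  ∑ x ∈ intShell d n, ∏ i, (x i : ℝ) ^ α i

theorem shellMoment_eq_zero_of_odd {n : ℕ} {α : Fin d → ℕ} {i : Fin d} (hi : Odd (α i)) :
    shellMoment d n α = 0 := by
  let flip : (Fin d → ℤ) → Fin d → ℤ := fun x => Function.update x i (-x i)
  have flip_flip : ∀ x, flip (flip x) = x := fun x => by simp [flip]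
  have prod_flip : ∀ x, ∏ j, (flip x j : ℝ) ^ α j = -∏ j, (x j : ℝ) ^ α j := fun x => by
    rw [← mul_prod_erase _ _ (mem_univ i), ← mul_prod_erase _ _ (mem_univ i),
      prod_congr rfl (g := fun j => (x j : ℝ) ^ α j) fun j hj => by
        simp [flip, Function.update_of_ne (ne_of_mem_erase hj)]]
    simp [flip, hi.neg_pow]
  have h : shellMoment d n α = -shellMoment d n α := by
    rw [shellMoment, ← sum_neg_distrib]
    exact sum_nbij' flip flip (fun x hx => update_neg_mem_intShell hx i)
      (fun x hx => update_neg_mem_intShell hx i) (fun x _ => flip_flip x)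
      (fun x _ => flip_flip x) (fun x _ => by rw [prod_flip, neg_neg])
  linarith

theorem shellMoment_comp_perm (n : ℕ) (α : Fin d → ℕ) (σ : Equiv.Perm (Fin d)) :
    shellMoment d n (α ∘ σ) = shellMoment d n α :=
  sum_nbij' (fun x => x ∘ σ.symm) (fun x => x ∘ σ) (fun x hx => comp_perm_mem_intShell hx _)
    (fun x hx => comp_perm_mem_intShell hx _) (fun x _ => by ext; simp) (fun x _ => by ext; simp)
    (fun x _ => by rw [← Equiv.prod_comp σ fun i => ((x ∘ σ.symm) i : ℝ) ^ α i]; simp)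

theorem sum_intShell_eval (n : ℕ) (P : MvPolynomial (Fin d) ℝ) :
    ∑ x ∈ intShell d n, eval (fun i => (x i : ℝ)) P =
      ∑ s ∈ P.support, coeff s P * shellMoment d n s := by
  simp_rw [eval_eq', shellMoment, mul_sum]
  exact sum_comm

def permOrbit (v : Fin d → ℕ) : Finset (Fin d → ℕ) :=
  univ.image fun σ : Equiv.Perm (Fin d) => v ∘ σ

theorem shellMoment_of_mem_permOrbit {n : ℕ} {v f : Fin d → ℕ} (hf : f ∈ permOrbit v) :
    shellMoment d n f = shellMoment d n v := by
  obtain ⟨σ, -, rfl⟩ := mem_image.1 hf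
  exact shellMoment_comp_perm n v σ

end Shell

section Coefficients

variable {σ R : Type*} [Fintype σ] [CommSemiring R]

theorem sum_support_coeff_mul_eq_sum (P : MvPolynomial σ R) (g : (σ → ℕ) → R)
    (D : Finset (σ → ℕ)) (hg : ∀ s ∈ P.support, ⇑s ∉ D → g s = 0) :
    ∑ s ∈ P.support, coeff s P * g s =
      ∑ f ∈ D, coeff (Finsupp.equivFunOnFinite.symm f) P * g f := by
  refine sum_bij_ne_zero (fun s _ _ => ⇑s) (fun s hs hne => ?_)
    (fun _ _ _ _ _ _ h => DFunLike.coe_injective h) (fun f _ hne => ?_) (fun s _ _ => by simp)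
  · by_contra hD
    exact hne (by rw [hg s hs hD, mul_zero])
  · exact ⟨_, mem_support_iff.2 (left_ne_zero_of_mul hne), by simpa using hne, by simp⟩

theorem coeff_sum_pderiv_pderiv [DecidableEq σ] (P : MvPolynomial σ R) (β : σ → ℕ) :
    coeff (Finsupp.equivFunOnFinite.symm β) (∑ j, pderiv j (pderiv j P)) =
      ∑ j, ((β j + 1) * (β j + 2) : R) *
        coeff (Finsupp.equivFunOnFinite.symm (β + Pi.single j 2)) P := by
  rw [coeff_sum]
  refine sum_congr rfl fun j _ => ?_
  have hβ : Finsupp.equivFunOnFinite.symm β + Finsupp.single j 1 + Finsupp.single j 1 =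
      Finsupp.equivFunOnFinite.symm (β + Pi.single j 2) := by
    ext k
    rcases eq_or_ne k j with rfl | hk <;> simp [*]
  rw [coeff_pderiv, coeff_pderiv, hβ]
  simp only [Finsupp.add_apply, Finsupp.coe_equivFunOnFinite_symm, Finsupp.single_eq_same]
  push_cast
  ring

end Coefficients

noncomputable def orbitCoeffSum {d : ℕ} {R : Type*} [CommSemiring R] (P : MvPolynomial (Fin d) R)
    (v : Fin d → ℕ) : R :=
  ∑ f ∈ permOrbit v, coeff (Finsupp.equivFunOnFinite.symm f) P

theorem sum_permOrbit_coeff_mul_shellMoment {d : ℕ} (n : ℕ) (P : MvPolynomial (Fin d) ℝ)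
    (v : Fin d → ℕ) :
    ∑ f ∈ permOrbit v, coeff (Finsupp.equivFunOnFinite.symm f) P * shellMoment d n f =
      orbitCoeffSum P v * shellMoment d n v := by
  rw [orbitCoeffSum, sum_mul]
  exact sum_congr rfl fun f hf => by rw [shellMoment_of_mem_permOrbit hf]

theorem mem_permOrbit_of_even_of_sum_eq_six {f : Fin 4 → ℕ} (hf : ∑ i, f i = 6)
    (heven : ∀ i, Even (f i)) :
    f ∈ permOrbit ![6, 0, 0, 0] ∪ permOrbit ![4, 2, 0, 0] ∪ permOrbit ![2, 2, 2, 0] := by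
  have key : ∀ f ∈ Nat.antidiagonalTuple 4 6, (∀ i, Even (f i)) →
      f ∈ permOrbit ![6, 0, 0, 0] ∪ permOrbit ![4, 2, 0, 0] ∪ permOrbit ![2, 2, 2, 0] := by
    decide
  exact key f (Nat.mem_antidiagonalTuple.2 hf) heven

theorem sum_intShell_eval_of_isHomogeneous_six (n : ℕ) {P : MvPolynomial (Fin 4) ℝ}
    (hP : P.IsHomogeneous 6) :
    ∑ x ∈ intShell 4 n, eval (fun i => (x i : ℝ)) P =
      orbitCoeffSum P ![6, 0, 0, 0] * shellMoment 4 n ![6, 0, 0, 0] +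
        orbitCoeffSum P ![4, 2, 0, 0] * shellMoment 4 n ![4, 2, 0, 0] +
        orbitCoeffSum P ![2, 2, 2, 0] * shellMoment 4 n ![2, 2, 2, 0] := by
  have hdisjoint : Disjoint (permOrbit ![6, 0, 0, 0]) (permOrbit ![4, 2, 0, 0]) ∧
      Disjoint (permOrbit ![6, 0, 0, 0] ∪ permOrbit ![4, 2, 0, 0]) (permOrbit ![2, 2, 2, 0]) := by
    decide
  rw [sum_intShell_eval, sum_support_coeff_mul_eq_sum _ _ _ fun s hs hD => ?_,
    sum_union hdisjoint.2, sum_union hdisjoint.1, sum_permOrbit_coeff_mul_shellMoment,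
    sum_permOrbit_coeff_mul_shellMoment, sum_permOrbit_coeff_mul_shellMoment]
  have hdeg : ∑ i, s i = 6 := by
    rw [← Finsupp.degree_eq_sum]
    by_contra h
    exact mem_support_iff.1 hs (hP.coeff_eq_zero h)
  obtain ⟨i, hi⟩ : ∃ i, ¬Even (s i) := by
    by_contra! h
    exact hD (mem_permOrbit_of_even_of_sum_eq_six hdeg h)
  exact shellMoment_eq_zero_of_odd (Nat.not_even_iff_odd.1 hi)

theorem orbitCoeffSum_eq_of_laplacian_eq_zero {P : MvPolynomial (Fin 4) ℝ}
    (hP : ∑ j, pderiv j (pderiv j P) = 0) :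
    orbitCoeffSum P ![4, 2, 0, 0] = -15 * orbitCoeffSum P ![6, 0, 0, 0] ∧
      orbitCoeffSum P ![2, 2, 2, 0] = 30 * orbitCoeffSum P ![6, 0, 0, 0] := by
  have relation : ∀ β : Fin 4 → ℕ, ∑ j, ((β j + 1) * (β j + 2) : ℝ) *
      coeff (Finsupp.equivFunOnFinite.symm (β + Pi.single j 2)) P = 0 := fun β => by
    rw [← coeff_sum_pderiv_pderiv, hP, coeff_zero]
  have h4 := sum_eq_zero (s := permOrbit ![4, 0, 0, 0]) fun β _ => relation β
  have h22 := sum_eq_zero (s := permOrbit ![2, 2, 0, 0]) fun β _ => relation β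
  rw [show permOrbit ![4, 0, 0, 0] = {![4, 0, 0, 0], ![0, 4, 0, 0], ![0, 0, 4, 0], ![0, 0, 0, 4]}
    by decide] at h4
  rw [show permOrbit ![2, 2, 0, 0] = {![2, 2, 0, 0], ![2, 0, 2, 0], ![2, 0, 0, 2], ![0, 2, 2, 0],
    ![0, 2, 0, 2], ![0, 0, 2, 2]} by decide] at h22
  rw [orbitCoeffSum, orbitCoeffSum, orbitCoeffSum,
    show permOrbit ![6, 0, 0, 0] = {![6, 0, 0, 0], ![0, 6, 0, 0], ![0, 0, 6, 0], ![0, 0, 0, 6]}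
      by decide,
    show permOrbit ![4, 2, 0, 0] = {![4, 2, 0, 0], ![4, 0, 2, 0], ![4, 0, 0, 2], ![2, 4, 0, 0],
      ![0, 4, 2, 0], ![0, 4, 0, 2], ![2, 0, 4, 0], ![0, 2, 4, 0], ![0, 0, 4, 2], ![2, 0, 0, 4],
      ![0, 2, 0, 4], ![0, 0, 2, 4]} by decide,
    show permOrbit ![2, 2, 2, 0] = {![2, 2, 2, 0], ![2, 2, 0, 2], ![2, 0, 2, 2], ![0, 2, 2, 2]}
      by decide]
  simp [Fin.sum_univ_four, Matrix.vecHead, Matrix.vecTail] at h4 h22 ⊢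
  constructor <;> linarith

theorem sum_intShell_eval_of_isHarmonic_six (n : ℕ) {P : MvPolynomial (Fin 4) ℝ}
    (hP : IsHarmonic 6 P) :
    ∑ x ∈ intShell 4 n, eval (fun i => (x i : ℝ)) P = orbitCoeffSum P ![6, 0, 0, 0] *
      (shellMoment 4 n ![6, 0, 0, 0] - 15 * shellMoment 4 n ![4, 2, 0, 0] +
        30 * shellMoment 4 n ![2, 2, 2, 0]) := by
  obtain ⟨hB, hC⟩ := orbitCoeffSum_eq_of_laplacian_eq_zero hP.2
  rw [sum_intShell_eval_of_isHomogeneous_six n hP.1, hB, hC]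
  ring

theorem D4_degree_six_theta_rank_one_general
    (P Q : MvPolynomial (Fin 4) ℝ) (hP : IsHarmonic 6 P) (hQ : IsHarmonic 6 Q)
    (m n : ℕ) :
    (∑ x ∈ intShell 4 (2 * m), eval (fun i => (x i : ℝ)) P) *
      (∑ x ∈ intShell 4 (2 * n), eval (fun i => (x i : ℝ)) Q) =
    (∑ x ∈ intShell 4 (2 * n), eval (fun i => (x i : ℝ)) P) *
      (∑ x ∈ intShell 4 (2 * m), eval (fun i => (x i : ℝ)) Q) := by
  simp only [sum_intShell_eval_of_isHarmonic_six _ hP, sum_intShell_eval_of_isHarmonic_six _ hQ]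
  ring

/-- The degree-6 weighted theta coefficients of the `D₄` lattice form a
rank-one family: for all harmonic polynomials `P, Q` of degree 6 in 4 variables and all
positive integers `m, n`,
`(∑_{x∈(D₄)_{2m}} P(x))·(∑_{x∈(D₄)_{2n}} Q(x)) = (∑_{x∈(D₄)_{2n}} P(x))·(∑_{x∈(D₄)_{2m}} Q(x))`.
(The image of the degree-6 theta map of `D₄` is the one-dimensional space spanned by the
newform `η(z)⁸η(2z)⁸` of weight 8 and level 2.) -/
theorem D4_degree_six_theta_rank_one
    (P Q : MvPolynomial (Fin 4) ℝ) (hP : IsHarmonic 6 P) (hQ : IsHarmonic 6 Q)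
    (m n : ℕ) (hm : 0 < m) (hn : 0 < n) :
    (∑ x ∈ intShell 4 (2 * m), eval (fun i => (x i : ℝ)) P) *
      (∑ x ∈ intShell 4 (2 * n), eval (fun i => (x i : ℝ)) Q) =
    (∑ x ∈ intShell 4 (2 * n), eval (fun i => (x i : ℝ)) P) *
      (∑ x ∈ intShell 4 (2 * m), eval (fun i => (x i : ℝ)) Q) :=
  D4_degree_six_theta_rank_one_general P Q hP hQ m n
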